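/- arXiv:0805.0209 — 3 statements merged into one kernel-verified Lean document; each statement's English description precedes it below -/
import Mathlib

section
/- For an element a of a Banach algebra A, ρ(a)^2 ≤ ρ(L_a R_a), where ρ(a) is the spectral radius of a and ρ(L_a R_a) the spectral radius of the operator x ↦ a x a on A. Consequently ρ(L_a R_a) = ρ(a)^2. -/
/-- Left multiplication operator `L_a : x ↦ a x`. -/
noncomputable def Lmul {A : Type*} [NormedRing A] [NormedAlgebra ℂ A] (a : A) : A →L[ℂ] A :=
  ContinuousLinearMap.mul ℂ A a

/-- Right multiplication operator `R_a : x ↦ x a`. -/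
noncomputable def Rmul {A : Type*} [NormedRing A] [NormedAlgebra ℂ A] (a : A) : A →L[ℂ] A :=
  (ContinuousLinearMap.mul ℂ A).flip a

open Filter ENNReal NNReal Topology

lemma Wpow_apply {A : Type*} [NormedRing A] [NormedAlgebra ℂ A] (a : A) (n : ℕ) (x : A) :
    ((((Lmul a).comp (Rmul a)) ^ n) x) = a ^ n * x * a ^ n := by
  induction n generalizing x with
  | zero => simp
  | succ n ih =>
    have hWx : ((Lmul a).comp (Rmul a)) x = a * (x * a) := by
      simp only [ContinuousLinearMap.comp_apply, Lmul, Rmul, ContinuousLinearMap.flip_apply,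
        ContinuousLinearMap.mul_apply']
    rw [pow_succ, ContinuousLinearMap.mul_apply, hWx, ih]
    have hc : a * a ^ n = a ^ n * a := by rw [← pow_succ', pow_succ]
    simp only [pow_succ, mul_assoc, hc]

/-- for an element `a` of a complex Banach algebra,
`ρ(a)^2 ≤ ρ(L_a R_a)`, and consequently `ρ(L_a R_a) = ρ(a)^2`. -/
theorem spectralRadius_W_eq_sq {A : Type*} [NormedRing A] [NormedAlgebra ℂ A]
    [CompleteSpace A] (a : A) :
    (spectralRadius ℂ a) ^ 2 ≤ spectralRadius ℂ ((Lmul a).comp (Rmul a)) ∧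
      spectralRadius ℂ ((Lmul a).comp (Rmul a)) = (spectralRadius ℂ a) ^ 2 := by
  set W : A →L[ℂ] A := (Lmul a).comp (Rmul a) with hW
  set r : ℝ≥0∞ := spectralRadius ℂ a with hr
  set R : ℝ≥0∞ := spectralRadius ℂ W with hRdef
  set f : ℕ → ℝ≥0∞ := fun n => (‖a ^ n‖₊ : ℝ≥0∞) ^ (1 / n : ℝ) with hf
  set g : ℕ → ℝ≥0∞ := fun n => (‖W ^ n‖₊ : ℝ≥0∞) ^ (1 / n : ℝ) with hg
  have hfr : Tendsto f atTop (𝓝 r) :=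
    spectrum.pow_nnnorm_pow_one_div_tendsto_nhds_spectralRadius a
  have hgR : Tendsto g atTop (𝓝 R) :=
    spectrum.pow_nnnorm_pow_one_div_tendsto_nhds_spectralRadius W
  -- squares with real exponent
  have hf2 : Tendsto (fun n => (f n) ^ (2 : ℝ)) atTop (𝓝 (r ^ (2 : ℝ))) :=
    hfr.ennrpow_const 2
  -- Step A : R ≤ r ^ 2
  have hWn_le : ∀ n : ℕ, ‖W ^ n‖₊ ≤ ‖a ^ n‖₊ * ‖a ^ n‖₊ := by
    intro n
    refine ContinuousLinearMap.opNNNorm_le_bound _ _ (fun x => ?_)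
    rw [Wpow_apply]
    calc ‖a ^ n * x * a ^ n‖₊ ≤ ‖a ^ n * x‖₊ * ‖a ^ n‖₊ := nnnorm_mul_le _ _
      _ ≤ ‖a ^ n‖₊ * ‖x‖₊ * ‖a ^ n‖₊ := by gcongr; exact nnnorm_mul_le _ _
      _ = ‖a ^ n‖₊ * ‖a ^ n‖₊ * ‖x‖₊ := by ring
  have hA : R ≤ r ^ (2 : ℝ) := by
    have h1 : R ≤ atTop.liminf g :=
      spectrum.spectralRadius_le_liminf_pow_nnnorm_pow_one_div ℂ W
    have h2 : atTop.liminf g ≤ atTop.liminf (fun n => (f n) ^ (2 : ℝ)) := by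
      refine Filter.liminf_le_liminf (Eventually.of_forall fun n => ?_)
      have hn : (0 : ℝ) ≤ 1 / n := by positivity
      calc g n ≤ ((‖a ^ n‖₊ * ‖a ^ n‖₊ : ℝ≥0) : ℝ≥0∞) ^ (1 / n : ℝ) := by
            exact ENNReal.rpow_le_rpow (by exact_mod_cast hWn_le n) hn
        _ = (f n) ^ (2 : ℝ) := by
            rw [ENNReal.coe_mul, ENNReal.mul_rpow_of_nonneg _ _ hn]
            rw [show ((2:ℝ)) = ((2:ℕ):ℝ) by norm_num, ENNReal.rpow_natCast]
            ring
    exact h1.trans (h2.trans_eq hf2.liminf_eq)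
  -- Step B : r ^ 2 ≤ R
  have hB : r ^ (2 : ℝ) ≤ R := by
    set s : ℕ → ℝ≥0∞ := fun n => (‖a ^ (2 * n)‖₊ : ℝ≥0∞) ^ (1 / n : ℝ) with hs
    have hs_eq : ∀ n : ℕ, s n = (f (2 * n)) ^ (2 : ℝ) := by
      intro n
      simp only [hs, hf]
      rw [← ENNReal.rpow_mul]
      congr 1
      push_cast
      rcases eq_or_ne (n : ℝ) 0 with h | h
      · rw [h]; norm_num
      · field_simp
    have hstend : Tendsto s atTop (𝓝 (r ^ (2 : ℝ))) := by
      have h2n : Tendsto (fun n : ℕ => 2 * n) atTop atTop :=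
        tendsto_atTop_atTop_of_monotone (fun x y h => by omega) (fun b => ⟨b, by omega⟩)
      have : Tendsto (fun n => (f (2 * n)) ^ (2 : ℝ)) atTop (𝓝 (r ^ (2 : ℝ))) :=
        (hfr.comp h2n).ennrpow_const 2
      exact this.congr (fun n => (hs_eq n).symm)
    have hs_le : ∀ n : ℕ, s n ≤ g n * ((‖(1 : A)‖₊ : ℝ≥0∞)) ^ (1 / n : ℝ) := by
      intro n
      have key : ‖a ^ (2 * n)‖₊ ≤ ‖W ^ n‖₊ * ‖(1 : A)‖₊ := by
        have : a ^ (2 * n) = ((W ^ n) : A →L[ℂ] A) (1 : A) := by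
          rw [Wpow_apply, mul_one, ← pow_add, two_mul]
        rw [this]
        exact ContinuousLinearMap.le_opNNNorm _ _
      have hn : (0 : ℝ) ≤ 1 / n := by positivity
      calc s n ≤ ((‖W ^ n‖₊ * ‖(1 : A)‖₊ : ℝ≥0) : ℝ≥0∞) ^ (1 / n : ℝ) :=
            ENNReal.rpow_le_rpow (by exact_mod_cast key) hn
        _ = g n * ((‖(1 : A)‖₊ : ℝ≥0∞)) ^ (1 / n : ℝ) := by
            rw [ENNReal.coe_mul, ENNReal.mul_rpow_of_nonneg _ _ hn]
    -- for every ε with 1 < ε < ∞, r^2 ≤ R * ε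
    have key : ∀ ε : ℝ≥0∞, 1 < ε → ε ≠ ∞ → r ^ (2 : ℝ) ≤ R * ε := by
      intro ε hε hεtop
      have hev : ∀ᶠ n : ℕ in atTop, ((‖(1 : A)‖₊ : ℝ≥0∞)) ^ (1 / n : ℝ) ≤ ε :=
        ENNReal.eventually_pow_one_div_le ENNReal.coe_ne_top hε
      have hev2 : ∀ᶠ n : ℕ in atTop, s n ≤ g n * ε := by
        filter_upwards [hev] with n hn
        exact (hs_le n).trans (mul_le_mul_right hn _)
      have hmul : Tendsto (fun n => g n * ε) atTop (𝓝 (R * ε)) :=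
        ENNReal.Tendsto.mul_const hgR (Or.inr hεtop)
      exact le_of_tendsto_of_tendsto hstend hmul hev2
    refine ENNReal.le_of_forall_lt_one_mul_le fun ε hε => ?_
    rcases eq_or_ne ε 0 with rfl | hε0
    · simp
    · have hεtop : ε ≠ ∞ := (hε.trans_le le_top).ne
      have hinv1 : 1 < ε⁻¹ := ENNReal.one_lt_inv.mpr hε
      have hinvtop : ε⁻¹ ≠ ∞ := by
        rw [Ne, ENNReal.inv_eq_top]; exact hε0
      have := key ε⁻¹ hinv1 hinvtop
      calc ε * r ^ (2 : ℝ) ≤ ε * (R * ε⁻¹) := mul_le_mul_right this _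
        _ = R * (ε * ε⁻¹) := by ring
        _ = R := by rw [ENNReal.mul_inv_cancel hε0 hεtop, mul_one]
  have hpow : r ^ 2 = r ^ (2 : ℝ) := by
    rw [show ((2:ℝ)) = ((2:ℕ):ℝ) by norm_num, ENNReal.rpow_natCast]
  constructor
  · rw [hpow]; exact hB
  · rw [hpow]; exact le_antisymm hA hB
end

section
/- If f : A → B is a continuous surjective homomorphism of Banach algebras and a ∈ A is a compact element (i.e., x ↦ a x a is a compact operator on A), then f(a) is a compact element of B. -/
section Defs

variable (B : Type*) [NonUnitalNormedRing B] [NormedSpace ℂ B]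
  [SMulCommClass ℂ B B] [IsScalarTower ℂ B B]

/-- A closed two-sided ideal of a (not necessarily unital) complex normed algebra. -/
structure ClosedIdeal where
  carrier : Submodule ℂ B
  isClosed : IsClosed (carrier : Set B)
  mul_mem_left : ∀ (x : B) ⦃a : B⦄, a ∈ carrier → x * a ∈ carrier
  mul_mem_right : ∀ (x : B) ⦃a : B⦄, a ∈ carrier → a * x ∈ carrier

variable {B}

/-- The two-sided multiplication map `W_b : x ↦ b x b` as a linear map. -/
def Wop (b : B) : B →ₗ[ℂ] B where
  toFun x := b * x * b
  map_add' x y := by simp [mul_add, add_mul]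
  map_smul' c x := by simp [mul_smul_comm, smul_mul_assoc]

/-- An element `b` of a Banach algebra is *compact* if `x ↦ b x b` is a compact operator. -/
def IsCompactElement' (b : B) : Prop := IsCompactOperator (Wop b)

end Defs

section Instances

variable {B : Type*} [NonUnitalNormedRing B] [NormedSpace ℂ B]
  [SMulCommClass ℂ B B] [IsScalarTower ℂ B B]

namespace ClosedIdeal

instance (J : ClosedIdeal B) : Mul J.carrier :=
  ⟨fun x y => ⟨(x : B) * y, J.mul_mem_left x y.2⟩⟩

@[simp] theorem coe_mul (J : ClosedIdeal B) (x y : J.carrier) :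
    ((x * y : J.carrier) : B) = (x : B) * y := rfl

instance (J : ClosedIdeal B) : NonUnitalNormedRing J.carrier :=
  { (inferInstance : NormedAddCommGroup J.carrier) with
    mul := (· * ·)
    mul_assoc := fun x y z => Subtype.ext (mul_assoc (x : B) y z)
    left_distrib := fun x y z => Subtype.ext (mul_add (x : B) y z)
    right_distrib := fun x y z => Subtype.ext (add_mul (x : B) y z)
    zero_mul := fun x => Subtype.ext (zero_mul (x : B))
    mul_zero := fun x => Subtype.ext (mul_zero (x : B))
    norm_mul_le := fun x y => norm_mul_le (x : B) y }

instance (J : ClosedIdeal B) : SMulCommClass ℂ J.carrier J.carrier :=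
  ⟨fun c x y => Subtype.ext (mul_smul_comm c (x : B) y).symm⟩

instance (J : ClosedIdeal B) : IsScalarTower ℂ J.carrier J.carrier :=
  ⟨fun c x y => Subtype.ext (smul_mul_assoc c (x : B) y)⟩

instance (J : ClosedIdeal B) [CompleteSpace B] : CompleteSpace J.carrier :=
  J.isClosed.completeSpace_coe

end ClosedIdeal

end Instances

section QuotInstances

variable {B : Type*} [NonUnitalNormedRing B] [NormedSpace ℂ B]
  [SMulCommClass ℂ B B] [IsScalarTower ℂ B B] (J : ClosedIdeal B)

instance : Mul (B ⧸ J.carrier) :=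
  ⟨Quotient.map₂ (· * ·) (by
    intro a a' ha b b' hb
    replace ha : a - a' ∈ J.carrier := (Submodule.quotientRel_def _).mp ha
    replace hb : b - b' ∈ J.carrier := (Submodule.quotientRel_def _).mp hb
    refine (Submodule.quotientRel_def _).mpr ?_
    have h : a * b - a' * b' = a * (b - b') + (a - a') * b' := by
      rw [mul_sub, sub_mul]; abel
    rw [h]
    exact J.carrier.add_mem (J.mul_mem_left a hb) (J.mul_mem_right b' ha))⟩

@[simp] theorem ClosedIdeal.mk_mul (a b : B) :
    (Submodule.Quotient.mk (a * b) : B ⧸ J.carrier) =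
      Submodule.Quotient.mk a * Submodule.Quotient.mk b := rfl

end QuotInstances

section QuotRing

variable {B : Type*} [NonUnitalNormedRing B] [NormedSpace ℂ B]
  [SMulCommClass ℂ B B] [IsScalarTower ℂ B B] (J : ClosedIdeal B)

noncomputable instance : NormedAddCommGroup (B ⧸ J.carrier) :=
  have : IsClosed ((J.carrier : Submodule ℂ B) : Set B) := J.isClosed
  Submodule.Quotient.normedAddCommGroup J.carrier

noncomputable instance : NonUnitalNormedRing (B ⧸ J.carrier) :=
  { (inferInstance : NormedAddCommGroup (B ⧸ J.carrier)) with
    mul := (· * ·)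
    mul_assoc := fun q1 q2 q3 => Quotient.inductionOn₃ q1 q2 q3 fun a b c =>
      congrArg Submodule.Quotient.mk (mul_assoc a b c)
    left_distrib := fun q1 q2 q3 => Quotient.inductionOn₃ q1 q2 q3 fun a b c =>
      congrArg Submodule.Quotient.mk (mul_add a b c)
    right_distrib := fun q1 q2 q3 => Quotient.inductionOn₃ q1 q2 q3 fun a b c =>
      congrArg Submodule.Quotient.mk (add_mul a b c)
    zero_mul := fun q => Quotient.inductionOn q fun a =>
      congrArg Submodule.Quotient.mk (zero_mul a)
    mul_zero := fun q => Quotient.inductionOn q fun a =>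
      congrArg Submodule.Quotient.mk (mul_zero a)
    norm_mul_le := fun q1 q2 => by
      have key : ∀ ε : ℝ, 0 < ε → ‖q1 * q2‖ ≤ (‖q1‖ + ε) * (‖q2‖ + ε) := by
        intro ε hε
        obtain ⟨a, rfl, ha⟩ := Submodule.Quotient.norm_mk_lt q1 hε
        obtain ⟨b, rfl, hb⟩ := Submodule.Quotient.norm_mk_lt q2 hε
        calc ‖(Submodule.Quotient.mk a : B ⧸ J.carrier) * Submodule.Quotient.mk b‖
            = ‖(Submodule.Quotient.mk (a * b) : B ⧸ J.carrier)‖ := by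
              rw [ClosedIdeal.mk_mul]
          _ ≤ ‖a * b‖ := Submodule.Quotient.norm_mk_le _ _
          _ ≤ ‖a‖ * ‖b‖ := norm_mul_le a b
          _ ≤ (‖(Submodule.Quotient.mk a : B ⧸ J.carrier)‖ + ε) *
                (‖(Submodule.Quotient.mk b : B ⧸ J.carrier)‖ + ε) := by
              apply mul_le_mul ha.le hb.le (norm_nonneg b)
              positivity
      have cont : Filter.Tendsto (fun ε : ℝ => (‖q1‖ + ε) * (‖q2‖ + ε))
          (nhdsWithin 0 (Set.Ioi 0)) (nhds (‖q1‖ * ‖q2‖)) := by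
        have h0 : Filter.Tendsto (fun ε : ℝ => (‖q1‖ + ε) * (‖q2‖ + ε))
            (nhds 0) (nhds ((‖q1‖ + 0) * (‖q2‖ + 0))) :=
          Continuous.tendsto (by continuity) 0
        simpa using h0.mono_left nhdsWithin_le_nhds
      exact ge_of_tendsto cont
        (Filter.eventually_of_mem self_mem_nhdsWithin fun ε hε => key ε hε) }

noncomputable instance : SMulCommClass ℂ (B ⧸ J.carrier) (B ⧸ J.carrier) :=
  ⟨fun c q1 q2 => Quotient.inductionOn₂ q1 q2 fun a b =>
    congrArg Submodule.Quotient.mk (mul_smul_comm c a b).symm⟩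

noncomputable instance : IsScalarTower ℂ (B ⧸ J.carrier) (B ⧸ J.carrier) :=
  ⟨fun c q1 q2 => Quotient.inductionOn₂ q1 q2 fun a b =>
    congrArg Submodule.Quotient.mk (smul_mul_assoc c a b)⟩

end QuotRing

section Hypo

variable (B : Type*) [NonUnitalNormedRing B] [NormedSpace ℂ B]
  [SMulCommClass ℂ B B] [IsScalarTower ℂ B B]

/-- A Banach algebra is *hypocompact* if every nonzero quotient by a closed
two-sided ideal contains a nonzero compact element. -/
def IsHypocompact : Prop :=
  ∀ J : ClosedIdeal B, J.carrier ≠ ⊤ →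
    ∃ q : B ⧸ J.carrier, q ≠ 0 ∧ IsCompactElement' q

end Hypo

theorem IsCompactOperator.of_comp_isOpenMap {M₁ M₂ M₃ : Type*} [Zero M₁] [Zero M₂]
    [TopologicalSpace M₁] [TopologicalSpace M₂] [TopologicalSpace M₃] {g : M₂ → M₃}
    {φ : M₁ → M₂} (hφ : IsOpenMap φ) (hφ0 : φ 0 = 0) (h : IsCompactOperator (g ∘ φ)) :
    IsCompactOperator g := by
  obtain ⟨K, hK, hmem⟩ := h
  have himage : φ '' (φ ⁻¹' (g ⁻¹' K)) ∈ nhds (0 : M₂) := hφ0 ▸ hφ.image_mem_nhds hmem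
  exact ⟨K, hK, Filter.mem_of_superset himage (Set.image_preimage_subset φ _)⟩

theorem Wop_map_comp {A B F : Type*} [NonUnitalNormedRing A] [NormedSpace ℂ A]
    [SMulCommClass ℂ A A] [IsScalarTower ℂ A A]
    [NonUnitalNormedRing B] [NormedSpace ℂ B]
    [SMulCommClass ℂ B B] [IsScalarTower ℂ B B]
    [FunLike F A B] [MulHomClass F A B] (f : F) (a : A) :
    Wop (f a) ∘ f = f ∘ Wop a := by
  ext x
  simp only [Function.comp_apply, Wop, LinearMap.coe_mk, AddHom.coe_mk, map_mul]

/-- a continuous surjective homomorphism of Banach algebras maps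
compact elements to compact elements. -/
theorem compactElement_map {A B : Type*} [NonUnitalNormedRing A] [NormedSpace ℂ A]
    [SMulCommClass ℂ A A] [IsScalarTower ℂ A A] [CompleteSpace A]
    [NonUnitalNormedRing B] [NormedSpace ℂ B]
    [SMulCommClass ℂ B B] [IsScalarTower ℂ B B] [CompleteSpace B]
    (f : A →ₙₐ[ℂ] B) (hf : Continuous f) (hsurj : Function.Surjective f)
    (a : A) (ha : IsCompactElement' a) : IsCompactElement' (f a) := by
  let φ : A →L[ℂ] B := ⟨f, hf⟩
  have hcomp : IsCompactOperator (Wop (f a) ∘ φ) := by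
    change IsCompactOperator (Wop (f a) ∘ f)
    rw [Wop_map_comp]
    exact ha.clm_comp φ
  exact hcomp.of_comp_isOpenMap (φ.isOpenMap hsurj) (map_zero φ)
end

section
/- Let P₁ and P₂ be hereditary topological radicals on Banach algebras. Then the map P₀ : A ↦ P₁(A) ∩ P₂(A) is again a hereditary topological radical; in particular P₀(A/P₀(A)) = 0 for every Banach algebra A. -/
universe u

/-- A hereditary topological radical on the class of complex Banach algebras:
an assignment of a closed two-sided ideal `P(A)` to every Banach algebra `A`
such that (R1) `P(A / P(A)) = 0`, (R2) `P(J) = J ∩ P(A)` for every closed ideal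
`J` of `A`, and (R3) `f(P(A)) ⊆ P(B)` for every continuous surjective
homomorphism `f : A → B`. -/
structure TopologicalRadical where
  ideal : ∀ (A : Type u) [NonUnitalNormedRing A] [NormedSpace ℂ A]
    [SMulCommClass ℂ A A] [IsScalarTower ℂ A A] [CompleteSpace A], ClosedIdeal A
  quot_eq_bot : ∀ (A : Type u) [NonUnitalNormedRing A] [NormedSpace ℂ A]
    [SMulCommClass ℂ A A] [IsScalarTower ℂ A A] [CompleteSpace A],
    (ideal (A ⧸ (ideal A).carrier)).carrier = ⊥
  hereditary : ∀ (A : Type u) [NonUnitalNormedRing A] [NormedSpace ℂ A]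
    [SMulCommClass ℂ A A] [IsScalarTower ℂ A A] [CompleteSpace A]
    (J : ClosedIdeal A),
    Subtype.val '' ((ideal J.carrier).carrier : Set J.carrier) =
      (J.carrier : Set A) ∩ ((ideal A).carrier : Set A)
  map_mem : ∀ (A B : Type u) [NonUnitalNormedRing A] [NormedSpace ℂ A]
    [SMulCommClass ℂ A A] [IsScalarTower ℂ A A] [CompleteSpace A]
    [NonUnitalNormedRing B] [NormedSpace ℂ B]
    [SMulCommClass ℂ B B] [IsScalarTower ℂ B B] [CompleteSpace B]
    (f : A →ₙₐ[ℂ] B), Continuous f → Function.Surjective f →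
    ∀ a ∈ (ideal A).carrier, f a ∈ (ideal B).carrier

/-!
Axioms (R2) and (R3) pass to intersections directly. For (R1), let `P₀ = P₁ ∩ P₂` and suppose
the class of `a` lies in `P₀(A ⧸ P₀(A))`. Since `P₀(A) ⊆ Pᵢ(A)`, the factor map
`A ⧸ P₀(A) → A ⧸ Pᵢ(A)` is a continuous surjective homomorphism, so by (R3) it carries that class
into `Pᵢ(A ⧸ Pᵢ(A)) = 0`; hence `a ∈ Pᵢ(A)` for both `i`, i.e. `a ∈ P₀(A)`.
-/

namespace ClosedIdeal

variable {A : Type*} [NonUnitalNormedRing A] [NormedSpace ℂ A]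

instance : Min (ClosedIdeal A) where
  min I J :=
    { carrier := I.carrier ⊓ J.carrier
      isClosed := I.isClosed.inter J.isClosed
      mul_mem_left := fun x _ ha => ⟨I.mul_mem_left x ha.1, J.mul_mem_left x ha.2⟩
      mul_mem_right := fun x _ ha => ⟨I.mul_mem_right x ha.1, J.mul_mem_right x ha.2⟩ }

@[simp] theorem carrier_inf (I J : ClosedIdeal A) : (I ⊓ J).carrier = I.carrier ⊓ J.carrier :=
  rfl

variable [SMulCommClass ℂ A A] [IsScalarTower ℂ A A]

noncomputable def factor {I J : ClosedIdeal A} (h : I.carrier ≤ J.carrier) :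
    (A ⧸ I.carrier) →ₙₐ[ℂ] (A ⧸ J.carrier) :=
  { Submodule.factor h with
    map_zero' := map_zero (Submodule.factor h)
    map_mul' := fun x y => Quotient.inductionOn₂ x y fun _ _ => rfl }

variable {I J : ClosedIdeal A} (h : I.carrier ≤ J.carrier)

@[simp] theorem factor_mk (a : A) :
    factor h (Submodule.Quotient.mk a) = Submodule.Quotient.mk a :=
  rfl

theorem continuous_factor : Continuous (factor h) :=
  I.carrier.isQuotientMap_mkQ.continuous_iff.mpr J.carrier.continuous_mkQ

theorem factor_surjective : Function.Surjective (factor h) :=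
  Submodule.factor_surjective h

end ClosedIdeal

namespace TopologicalRadical

variable (P : TopologicalRadical.{u}) {A : Type u} [NonUnitalNormedRing A] [NormedSpace ℂ A]
  [SMulCommClass ℂ A A] [IsScalarTower ℂ A A] [CompleteSpace A]

theorem mem_of_mk_mem {I : ClosedIdeal A} (hI : I.carrier ≤ (P.ideal A).carrier) {a : A}
    (ha : Submodule.Quotient.mk a ∈ (P.ideal (A ⧸ I.carrier)).carrier) :
    a ∈ (P.ideal A).carrier := by
  have h := P.map_mem _ _ (ClosedIdeal.factor hI) (ClosedIdeal.continuous_factor hI)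
    (ClosedIdeal.factor_surjective hI) _ ha
  rwa [P.quot_eq_bot, ClosedIdeal.factor_mk, Submodule.mem_bot,
    Submodule.Quotient.mk_eq_zero] at h

noncomputable def inf (P₁ P₂ : TopologicalRadical.{u}) : TopologicalRadical.{u} where
  ideal A _ _ _ _ _ := P₁.ideal A ⊓ P₂.ideal A
  quot_eq_bot A _ _ _ _ _ := by
    refine (Submodule.eq_bot_iff _).mpr fun x hx => ?_
    obtain ⟨a, rfl⟩ := Submodule.Quotient.mk_surjective _ x
    exact (Submodule.Quotient.mk_eq_zero _).mpr
      ⟨P₁.mem_of_mk_mem inf_le_left hx.1, P₂.mem_of_mk_mem inf_le_right hx.2⟩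
  hereditary A _ _ _ _ _ J := by
    simp only [ClosedIdeal.carrier_inf, Submodule.coe_inf,
      Set.image_inter Subtype.val_injective, P₁.hereditary, P₂.hereditary]
    exact (Set.inter_inter_distrib_left _ _ _).symm
  map_mem A B _ _ _ _ _ _ _ _ _ _ f hf hs a ha :=
    ⟨P₁.map_mem A B f hf hs a ha.1, P₂.map_mem A B f hf hs a ha.2⟩

end TopologicalRadical

/-- the intersection of two hereditary topological radicals is
again a hereditary topological radical (in particular `P₀(A / P₀(A)) = 0`). -/
theorem topologicalRadical_inf (P₁ P₂ : TopologicalRadical.{u}) :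
    ∃ P₀ : TopologicalRadical.{u},
      ∀ (A : Type u) [NonUnitalNormedRing A] [NormedSpace ℂ A]
        [SMulCommClass ℂ A A] [IsScalarTower ℂ A A] [CompleteSpace A],
        (P₀.ideal A).carrier = (P₁.ideal A).carrier ⊓ (P₂.ideal A).carrier :=
  ⟨P₁.inf P₂, fun _ _ _ _ _ _ => rfl⟩
end
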